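/- arXiv:1105.1448 — 7 statements merged into one kernel-verified Lean document; each statement's English description precedes it below -/
import Mathlib

section
/- Let Γ be a totally ordered abelian group and β₀, β₁, …, β_k positive elements of Γ. For each i with 1 ≤ i ≤ k let n̄_i = [G(β₀,…,β_i) : G(β₀,…,β_{i-1})] be the index of the subgroup generated by β₀,…,β_{i-1} in the subgroup generated by β₀,…,β_i, and assume each n̄_i is finite and that n̄_i·β_i < β_{i+1} for 1 ≤ i ≤ k−1. Then every γ in the group generated by β₀,…,β_k with γ ≥ n̄_k·β_k lies in the semigroup generated by β₀,…,β_k (i.e., γ is a sum a₀β₀ + a₁β₁ + … + a_kβ_k with all a_i nonnegative integers). -/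
/-!
Induction on `i`. Every `γ ∈ G(β₀,…,β_i)` is `g + a • β_i` with `g ∈ G(β₀,…,β_{i-1})` and
`0 ≤ a < n̄_i`, because `n̄_i • β_i` already lies in the smaller group. If `γ ≥ n̄_i • β_i` then
`g ≥ (n̄_i - a) • β_i ≥ β_i > n̄_{i-1} • β_{i-1}`, so `g` lies in the smaller semigroup by induction;
at the bottom, a positive multiple of `β₀` is a nonnegative one.
-/

open Set

section

variable {Γ : Type*} [AddCommGroup Γ]

lemma AddSubgroup.exists_add_zsmul_of_mem_closure_insert {s : Set Γ} {b γ : Γ}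
    (hγ : γ ∈ AddSubgroup.closure (insert b s)) :
    ∃ g ∈ AddSubgroup.closure s, ∃ m : ℤ, γ = g + m • b := by
  rw [insert_eq, AddSubgroup.closure_union, ← AddSubgroup.zmultiples_eq_closure,
    AddSubgroup.mem_sup] at hγ
  obtain ⟨_, ⟨m, rfl⟩, g, hg, rfl⟩ := hγ
  exact ⟨g, hg, m, add_comm _ _⟩

lemma AddSubgroup.exists_add_nsmul_lt_of_mem_closure_insert {s : Set Γ} {b γ : Γ} {N : ℕ}
    (hN : N ≠ 0) (hNb : N • b ∈ AddSubgroup.closure s)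
    (hγ : γ ∈ AddSubgroup.closure (insert b s)) :
    ∃ g ∈ AddSubgroup.closure s, ∃ a < N, γ = g + a • b := by
  obtain ⟨g, hg, m, rfl⟩ := exists_add_zsmul_of_mem_closure_insert hγ
  have hN' : (0 : ℤ) < N := by positivity
  have hr₀ : 0 ≤ m % N := Int.emod_nonneg m hN'.ne'
  have hr₁ : m % N < N := Int.emod_lt_of_pos m hN'
  refine ⟨g + (m / N) • (N • b), add_mem hg (zsmul_mem hNb _), (m % N).toNat, by omega, ?_⟩
  rw [← natCast_zsmul b (m % N).toNat, Int.toNat_of_nonneg hr₀, ← natCast_zsmul b N, smul_smul,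
    add_assoc, ← add_zsmul, Int.ediv_mul_add_emod]

variable [LinearOrder Γ] [IsOrderedAddMonoid Γ]

lemma AddSubmonoid.mem_closure_singleton_of_pos {b γ : Γ} (hb : 0 ≤ b)
    (hγ : γ ∈ AddSubgroup.closure {b}) (hγpos : 0 < γ) : γ ∈ AddSubmonoid.closure {b} := by
  obtain ⟨m, rfl⟩ := AddSubgroup.mem_closure_singleton.mp hγ
  have hm : 0 ≤ m := by
    by_contra! hm
    exact hγpos.not_ge (smul_nonpos_of_nonpos_of_nonneg hm.le hb)
  rw [← Int.toNat_of_nonneg hm, natCast_zsmul]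
  exact nsmul_mem (subset_closure (mem_singleton b)) _

lemma AddSubmonoid.mem_closure_insert_of_nsmul_le {s : Set Γ} {b γ : Γ} {N : ℕ} (hb : 0 ≤ b)
    (hN : N ≠ 0) (hNb : N • b ∈ AddSubgroup.closure s)
    (hs : ∀ g ∈ AddSubgroup.closure s, b ≤ g → g ∈ AddSubmonoid.closure s)
    (hγ : γ ∈ AddSubgroup.closure (insert b s)) (hge : N • b ≤ γ) :
    γ ∈ AddSubmonoid.closure (insert b s) := by
  obtain ⟨g, hg, a, ha, rfl⟩ := AddSubgroup.exists_add_nsmul_lt_of_mem_closure_insert hN hNb hγ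
  have hbg : b ≤ g := by
    have : (N - a) • b + a • b ≤ g + a • b := by rwa [← add_nsmul, Nat.sub_add_cancel ha.le]
    calc b = 1 • b := (one_nsmul b).symm
      _ ≤ (N - a) • b := nsmul_le_nsmul_left hb (by omega)
      _ ≤ g := le_of_add_le_add_right this
  exact add_mem (closure_mono (subset_insert _ _) (hs g hg hbg))
    (nsmul_mem (subset_closure (mem_insert _ _)) _)

lemma AddSubmonoid.mem_closure_image_Iic_succ {β : ℕ → Γ} {i N : ℕ} {γ : Γ}
    (hN : N = (AddSubgroup.closure (β '' Iio (i + 1))).relIndex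
      (AddSubgroup.closure (β '' Iic (i + 1))))
    (hN0 : N ≠ 0) (hβ : 0 ≤ β (i + 1))
    (hs : ∀ g ∈ AddSubgroup.closure (β '' Iic i), β (i + 1) ≤ g →
      g ∈ AddSubmonoid.closure (β '' Iic i))
    (hγ : γ ∈ AddSubgroup.closure (β '' Iic (i + 1))) (hge : N • β (i + 1) ≤ γ) :
    γ ∈ AddSubmonoid.closure (β '' Iic (i + 1)) := by
  have hIic : β '' Iic (i + 1) = insert (β (i + 1)) (β '' Iic i) := by
    rw [← Order.succ_eq_add_one, Order.Iic_succ, image_insert_eq]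
  have hNb : N • β (i + 1) ∈ AddSubgroup.closure (β '' Iic i) := by
    rw [hN, ← Iio_add_one_eq_Iic]
    exact AddSubgroup.nsmul_relIndex_mem _ (AddSubgroup.subset_closure (mem_image_of_mem β (mem_Iic.2 le_rfl)))
  rw [hIic] at hγ ⊢
  exact mem_closure_insert_of_nsmul_le hβ hN0 hNb hs hγ hge

end

/-- If `β₀,…,β_k` are positive elements of a totally ordered abelian group,
the indices `n̄_i = [G(β₀,…,β_i) : G(β₀,…,β_{i-1})]` are finite and `n̄_i • β_i < β_{i+1}`
for `1 ≤ i ≤ k-1`, then every `γ` in the group generated by `β₀,…,β_k` with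
`γ ≥ n̄_k • β_k` lies in the semigroup generated by `β₀,…,β_k`. -/
theorem stmt_0 {Γ : Type*} [AddCommGroup Γ] [LinearOrder Γ] [IsOrderedAddMonoid Γ] (k : ℕ) (hk : 1 ≤ k)
    (β : ℕ → Γ) (hpos : ∀ i, i ≤ k → 0 < β i)
    (n : ℕ → ℕ)
    (hn : ∀ i, 1 ≤ i → i ≤ k →
      n i = (AddSubgroup.closure (β '' Set.Iio i)).relIndex
              (AddSubgroup.closure (β '' Set.Iic i)))
    (hfin : ∀ i, 1 ≤ i → i ≤ k → n i ≠ 0)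
    (hgrow : ∀ i, 1 ≤ i → i ≤ k - 1 → (n i) • β i < β (i + 1))
    (γ : Γ) (hγ : γ ∈ AddSubgroup.closure (β '' Set.Iic k))
    (hge : (n k) • β k ≤ γ) :
    γ ∈ AddSubmonoid.closure (β '' Set.Iic k) := by
  have step : ∀ i, i + 1 ≤ k →
      (∀ g ∈ AddSubgroup.closure (β '' Iic i), β (i + 1) ≤ g →
        g ∈ AddSubmonoid.closure (β '' Iic i)) →
      ∀ γ ∈ AddSubgroup.closure (β '' Iic (i + 1)), n (i + 1) • β (i + 1) ≤ γ →
        γ ∈ AddSubmonoid.closure (β '' Iic (i + 1)) := fun i hi hs _ hγ hge =>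
    AddSubmonoid.mem_closure_image_Iic_succ (hn _ le_add_self hi) (hfin _ le_add_self hi)
      (hpos _ hi).le hs hγ hge
  suffices ∀ i, 1 ≤ i → i ≤ k → ∀ γ ∈ AddSubgroup.closure (β '' Iic i), n i • β i ≤ γ →
      γ ∈ AddSubmonoid.closure (β '' Iic i) from this k hk le_rfl γ hγ hge
  refine Nat.le_induction (fun _ => step 0 hk fun g hg hle => ?_) fun i hi ih hik =>
    step i hik fun g hg hle => ih (by omega) g hg ((hgrow i hi (by omega)).le.trans hle)
  rw [← Nat.bot_eq_zero, Iic_bot, image_singleton] at hg ⊢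
  exact AddSubmonoid.mem_closure_singleton_of_pos (hpos 0 (by omega)).le hg
    ((hpos 1 hk).trans_le hle)
end

section
/- Let Γ be a totally ordered abelian group and β₀, β₁, …, β_k positive elements with finite indices n̄_i = [G(β₀,…,β_i):G(β₀,…,β_{i-1})] satisfying n̄_i·β_i < β_{i+1} for 1 ≤ i ≤ k−1. Then every element of G(β₀,…,β_k) has a unique expansion a₀β₀ + a₁β₁ + ⋯ + a_kβ_k with a₀ ∈ ℤ and 0 ≤ a_i < n̄_i for 1 ≤ i ≤ k. -/
/-!
For a subgroup `H` and an element `x`, the index `N = [H + ℤx : H]` is the order of `x` modulo `H`,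
so `m • x ∈ H ↔ N ∣ m`; hence every element of `H + ℤx` is `h + r • x` with `h ∈ H` and a unique
`0 ≤ r < N`. Applying this to `H = G(β₀,…,β_{i-1})`, `x = β_i` for `i = k, k-1, …, 1` peels off
the coefficients `a_k, …, a_1`, and the remaining element of `ℤβ₀` determines `a₀` because a
positive element of an ordered group has infinite order.
-/

open AddSubgroup

namespace AddSubgroup

variable {G : Type*} [AddCommGroup G] (H : AddSubgroup G) (x : G)

lemma relIndex_sup_zmultiples :
    H.relIndex (H ⊔ zmultiples x) = addOrderOf (x : G ⧸ H) := by
  rw [← QuotientAddGroup.ker_mk' H, relIndex_ker, map_sup, QuotientAddGroup.ker_mk',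
    QuotientAddGroup.map_mk'_self, bot_sup_eq, AddMonoidHom.map_zmultiples, Nat.card_zmultiples]
  rfl

lemma zsmul_mem_iff_relIndex_dvd (m : ℤ) :
    m • x ∈ H ↔ (H.relIndex (H ⊔ zmultiples x) : ℤ) ∣ m := by
  rw [relIndex_sup_zmultiples, addOrderOf_dvd_iff_zsmul_eq_zero, ← QuotientAddGroup.mk_zsmul,
    QuotientAddGroup.eq_zero_iff]

lemma existsUnique_sub_zsmul_mem (hN : H.relIndex (H ⊔ zmultiples x) ≠ 0) {y : G}
    (hy : y ∈ H ⊔ zmultiples x) :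
    ∃! r : ℤ, (0 ≤ r ∧ r < (H.relIndex (H ⊔ zmultiples x) : ℤ)) ∧ y - r • x ∈ H := by
  set N : ℤ := ((H.relIndex (H ⊔ zmultiples x) : ℕ) : ℤ)
  have hN_pos : 0 < N := by positivity
  obtain ⟨h, hh, _, ⟨m, rfl⟩, rfl⟩ := mem_sup.mp hy
  have hmem_iff (r : ℤ) : h + m • x - r • x ∈ H ↔ r ≡ m [ZMOD N] := by
    rw [add_sub_assoc, ← sub_smul, add_mem_cancel_left hh, zsmul_mem_iff_relIndex_dvd,
      Int.modEq_iff_dvd]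
  refine ⟨m % N, ⟨⟨Int.emod_nonneg m hN_pos.ne', Int.emod_lt_of_pos m hN_pos⟩, ?_⟩, ?_⟩
  · exact (hmem_iff _).mpr (Int.mod_modEq m N)
  · rintro r ⟨⟨hr0, hrN⟩, hr⟩
    rw [← ((hmem_iff r).mp hr).eq, Int.emod_eq_of_lt hr0 hrN]

end AddSubgroup

section Expansion

variable {Γ : Type*} [AddCommGroup Γ] (β : ℕ → Γ) (n : ℕ → ℕ)

lemma closure_image_Iic_eq_sup (i : ℕ) :
    closure (β '' Set.Iic i) = closure (β '' Set.Iio i) ⊔ zmultiples (β i) := by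
  rw [← Set.Iio_insert, Set.image_insert_eq, ← Set.union_singleton, AddSubgroup.closure_union,
    zmultiples_eq_closure]

lemma sum_zsmul_mem_closure_image_Iic (k : ℕ) (a : Fin (k + 1) → ℤ) :
    ∑ i : Fin (k + 1), a i • β i ∈ closure (β '' Set.Iic k) :=
  sum_mem fun i _ ↦ zsmul_mem
    (subset_closure (Set.mem_image_of_mem β (Set.mem_Iic.mpr (Nat.lt_succ_iff.mp i.isLt)))) _

def IsStandardExpansion (k : ℕ) (γ : Γ) (a : Fin (k + 1) → ℤ) : Prop :=
  (∀ i : Fin (k + 1), 1 ≤ (i : ℕ) → 0 ≤ a i ∧ a i < (n i : ℤ)) ∧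
    γ = ∑ i : Fin (k + 1), a i • β (i : ℕ)

variable {β n}

lemma isStandardExpansion_zero_iff {γ : Γ} {a : Fin 1 → ℤ} :
    IsStandardExpansion β n 0 γ a ↔ γ = a 0 • β 0 := by
  simp [IsStandardExpansion]

lemma isStandardExpansion_snoc_iff {k : ℕ} {γ : Γ} {a : Fin (k + 1) → ℤ} {r : ℤ} :
    IsStandardExpansion β n (k + 1) γ (Fin.snoc a r) ↔
      (0 ≤ r ∧ r < n (k + 1)) ∧ IsStandardExpansion β n k (γ - r • β (k + 1)) a := by
  rw [IsStandardExpansion, IsStandardExpansion, Fin.forall_fin_succ', Fin.sum_univ_castSucc,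
    sub_eq_iff_eq_add]
  simp only [Fin.snoc_castSucc, Fin.snoc_last, Fin.val_castSucc, Fin.val_last,
    le_add_iff_nonneg_left, zero_le, forall_const]
  tauto

theorem existsUnique_isStandardExpansion (hβ₀ : ¬IsOfFinAddOrder (β 0)) (k : ℕ)
    (hn : ∀ i, 1 ≤ i → i ≤ k →
      n i = (closure (β '' Set.Iio i)).relIndex (closure (β '' Set.Iic i)))
    (hfin : ∀ i, 1 ≤ i → i ≤ k → n i ≠ 0) {γ : Γ} (hγ : γ ∈ closure (β '' Set.Iic k)) :
    ∃! a, IsStandardExpansion β n k γ a := by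
  induction k generalizing γ with
  | zero =>
    simp only [isStandardExpansion_zero_iff]
    rw [show Set.Iic 0 = {0} from Set.Iic_bot, Set.image_singleton,
      ← zmultiples_eq_closure] at hγ
    obtain ⟨m, rfl⟩ := mem_zmultiples_iff.mp hγ
    refine ⟨fun _ ↦ m, rfl, fun b hb ↦ funext fun i ↦ ?_⟩
    rw [Fin.fin_one_eq_zero i]
    exact injective_zsmul_iff_not_isOfFinAddOrder.mpr hβ₀ hb.symm
  | succ k ih =>
    set H := closure (β '' Set.Iic k)
    have hsup : closure (β '' Set.Iic (k + 1)) = H ⊔ zmultiples (β (k + 1)) := by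
      rw [closure_image_Iic_eq_sup, Set.Iio_add_one_eq_Iic]
    have hindex : n (k + 1) = H.relIndex (H ⊔ zmultiples (β (k + 1))) := by
      rw [hn (k + 1) le_add_self le_rfl, ← hsup, Set.Iio_add_one_eq_Iic]
    rw [hsup] at hγ
    obtain ⟨r, ⟨hr, hγr⟩, hr_unique⟩ :=
      existsUnique_sub_zsmul_mem H (β (k + 1)) (hindex ▸ hfin (k + 1) le_add_self le_rfl) hγ
    rw [← hindex] at hr hr_unique
    obtain ⟨a, ha, ha_unique⟩ := ih (fun i h₁ h₂ ↦ hn i h₁ (by omega))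
      (fun i h₁ h₂ ↦ hfin i h₁ (by omega)) hγr
    refine ⟨Fin.snoc a r, isStandardExpansion_snoc_iff.mpr ⟨hr, ha⟩, fun b hb ↦ ?_⟩
    rw [← Fin.snoc_init_self b, isStandardExpansion_snoc_iff] at hb
    obtain ⟨hb_last, hb_init⟩ := hb
    have hb_last_eq : b (Fin.last _) = r :=
      hr_unique _ ⟨hb_last, hb_init.2 ▸ sum_zsmul_mem_closure_image_Iic β k _⟩
    rw [hb_last_eq] at hb_init
    rw [← Fin.snoc_init_self b, hb_last_eq, ha_unique _ hb_init]

end Expansion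

theorem stmt_2_general {Γ : Type*} [AddCommGroup Γ] [LinearOrder Γ] [IsOrderedAddMonoid Γ] (k : ℕ)
    (β : ℕ → Γ) (hpos : ∀ i, i ≤ k → 0 < β i)
    (n : ℕ → ℕ)
    (hn : ∀ i, 1 ≤ i → i ≤ k →
      n i = (AddSubgroup.closure (β '' Set.Iio i)).relIndex
              (AddSubgroup.closure (β '' Set.Iic i)))
    (hfin : ∀ i, 1 ≤ i → i ≤ k → n i ≠ 0)
    (γ : Γ) (hγ : γ ∈ AddSubgroup.closure (β '' Set.Iic k)) :
    ∃! a : Fin (k + 1) → ℤ,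
      (∀ i : Fin (k + 1), 1 ≤ (i : ℕ) → 0 ≤ a i ∧ a i < (n i : ℤ)) ∧
      γ = ∑ i : Fin (k + 1), a i • β (i : ℕ) := by
  have hβ₀ : ¬IsOfFinAddOrder (β 0) :=
    injective_zsmul_iff_not_isOfFinAddOrder.mp (zsmul_left_strictMono (hpos 0 k.zero_le)).injective
  exact existsUnique_isStandardExpansion hβ₀ k hn hfin hγ

/-- Under the hypotheses of Lemma 2, every element of `G(β₀,…,β_k)` has a
unique expansion `a₀β₀ + ⋯ + a_kβ_k` with `a₀ ∈ ℤ` and `0 ≤ a_i < n̄_i` for `1 ≤ i ≤ k`. -/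
theorem stmt_2 {Γ : Type*} [AddCommGroup Γ] [LinearOrder Γ] [IsOrderedAddMonoid Γ] (k : ℕ) (hk : 1 ≤ k)
    (β : ℕ → Γ) (hpos : ∀ i, i ≤ k → 0 < β i)
    (n : ℕ → ℕ)
    (hn : ∀ i, 1 ≤ i → i ≤ k →
      n i = (AddSubgroup.closure (β '' Set.Iio i)).relIndex
              (AddSubgroup.closure (β '' Set.Iic i)))
    (hfin : ∀ i, 1 ≤ i → i ≤ k → n i ≠ 0)
    (hgrow : ∀ i, 1 ≤ i → i ≤ k - 1 → (n i) • β i < β (i + 1))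
    (γ : Γ) (hγ : γ ∈ AddSubgroup.closure (β '' Set.Iic k)) :
    ∃! a : Fin (k + 1) → ℤ,
      (∀ i : Fin (k + 1), 1 ≤ (i : ℕ) → 0 ≤ a i ∧ a i < (n i : ℤ)) ∧
      γ = ∑ i : Fin (k + 1), a i • β (i : ℕ) :=
  stmt_2_general k β hpos n hn hfin γ hγ
end

section
/- Define rational numbers β₀ = 1, β₁ = 3/2, and β_i = 2β_{i-1} + 1/2^i for i ≥ 2. Then for every i ≥ 1, the index [G(β₀,…,β_i) : G(β₀,…,β_{i-1})] of subgroups of ℚ equals 2, and 2·β_i < β_{i+1}. -/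
/-!
Writing `cᵢ = 2⁻ⁱ`, every `βᵢ` with `i ≥ 1` is an odd multiple of `cᵢ`, since
`2ⁱβᵢ = 4 · 2ⁱ⁻¹βᵢ₋₁ + 1`. As `cᵢ₋₁ = 2cᵢ` and an odd integer is coprime to `2`, induction on `i`
gives `G(β₀, …, βᵢ) = ℤ cᵢ`, so consecutive groups have index `2`. The inequality is the
recursion itself, as `2⁻ⁱ⁻¹ > 0`.
-/

open Set AddSubgroup

theorem AddSubgroup.zmultiples_zsmul_sup_zmultiples_zsmul {G : Type*} [AddGroup G] (c : G)
    (m n : ℤ) :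
    zmultiples (m • c) ⊔ zmultiples (n • c) = zmultiples ((m.gcd n : ℤ) • c) := by
  simp only [← zmultiplesHom_apply, ← AddMonoidHom.map_zmultiples, ← map_sup, Int.zmultiples_sup]

theorem AddSubgroup.relIndex_zmultiples_zsmul {G : Type*} [AddGroup G] {a : G}
    (ha : ¬IsOfFinAddOrder a) (n : ℤ) :
    (zmultiples (n • a)).relIndex (zmultiples a) = n.natAbs := by
  have hinj : Function.Injective (zmultiplesHom G a) :=
    injective_zsmul_iff_not_isOfFinAddOrder.mpr ha
  have hmap_top : (⊤ : AddSubgroup ℤ).map (zmultiplesHom G a) = zmultiples a := by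
    rw [← Int.zmultiples_one, AddMonoidHom.map_zmultiples, zmultiplesHom_apply, one_zsmul]
  rw [← zmultiplesHom_apply, ← AddMonoidHom.map_zmultiples, ← hmap_top,
    relIndex_map_map_of_injective _ _ hinj, relIndex_top_right, Int.index_zmultiples]

theorem AddSubgroup.closure_image_Iic_eq_zmultiples {G : Type*} [AddCommGroup G] (β c : ℕ → G)
    (h0 : β 0 = c 0) (hc : ∀ i, c i = (2 : ℤ) • c (i + 1))
    (hodd : ∀ i, ∃ m : ℤ, Odd m ∧ β (i + 1) = m • c (i + 1)) (i : ℕ) :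
    closure (β '' Iic i) = zmultiples (c i) := by
  induction i with
  | zero => rw [show Iic 0 = {0} from Iic_bot, image_singleton, h0, zmultiples_eq_closure]
  | succ i ih =>
    obtain ⟨m, hm, hβ⟩ := hodd i
    have hgcd : m.gcd 2 = 1 := Int.isCoprime_iff_gcd_eq_one.mp (Int.isCoprime_two_right.mpr hm)
    rw [← Order.succ_eq_add_one, Order.Iic_succ, image_insert_eq, ← singleton_union,
      closure_union, ← zmultiples_eq_closure, ih, Order.succ_eq_add_one, hβ, hc i,
      zmultiples_zsmul_sup_zmultiples_zsmul, hgcd, Nat.cast_one, one_zsmul]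

theorem exists_odd_zsmul_inv_two_pow (β : ℕ → ℚ) (h1 : β 1 = 3 / 2)
    (hrec : ∀ i, 2 ≤ i → β i = 2 * β (i - 1) + 1 / 2 ^ i) (i : ℕ) :
    ∃ m : ℤ, Odd m ∧ β (i + 1) = m • ((2 : ℚ) ^ (i + 1))⁻¹ := by
  induction i with
  | zero => exact ⟨3, by decide, by rw [h1]; norm_num⟩
  | succ i ih =>
    obtain ⟨m, -, hm⟩ := ih
    refine ⟨4 * m + 1, ⟨2 * m, by ring⟩, ?_⟩
    rw [hrec (i + 1 + 1) (by omega), Nat.add_sub_cancel, hm, zsmul_eq_mul, zsmul_eq_mul]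
    push_cast
    field_simp
    ring

/-- With `β₀ = 1`, `β₁ = 3/2`, `β_i = 2β_{i-1} + 1/2^i` for `i ≥ 2`,
for every `i ≥ 1` the index `[G(β₀,…,β_i) : G(β₀,…,β_{i-1})]` of subgroups of `ℚ`
equals `2`, and `2 β_i < β_{i+1}`. -/
theorem stmt_4 (β : ℕ → ℚ) (h0 : β 0 = 1) (h1 : β 1 = 3 / 2)
    (hrec : ∀ i, 2 ≤ i → β i = 2 * β (i - 1) + 1 / 2 ^ i) :
    ∀ i, 1 ≤ i →
      (AddSubgroup.closure (β '' Set.Iio i)).relIndex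
        (AddSubgroup.closure (β '' Set.Iic i)) = 2 ∧
      2 * β i < β (i + 1) := by
  have hhalf (i : ℕ) : ((2 : ℚ) ^ i)⁻¹ = (2 : ℤ) • ((2 : ℚ) ^ (i + 1))⁻¹ := by
    rw [two_zsmul, pow_succ, mul_inv]; ring
  have hclosure := closure_image_Iic_eq_zmultiples β (fun i ↦ ((2 : ℚ) ^ i)⁻¹)
    (by rw [h0, pow_zero, inv_one]) hhalf (exists_odd_zsmul_inv_two_pow β h1 hrec)
  intro i hi
  obtain ⟨j, rfl⟩ := Nat.exists_eq_add_of_le' hi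
  refine ⟨?_, ?_⟩
  · rw [Iio_add_one_eq_Iic, hclosure, hclosure, hhalf j,
      relIndex_zmultiples_zsmul (not_isOfFinAddOrder_of_isAddTorsionFree (by positivity))]
    rfl
  · rw [hrec (j + 1 + 1) (by omega), Nat.add_sub_cancel]
    exact lt_add_of_pos_right _ (by positivity)
end

section
/- Define rational numbers β₀ = 1, β₁ = 3/2, and β_i = 2β_{i-1} + 1/2^i for i ≥ 2. Then the subgroup of ℚ generated by all the β_i equals the group of dyadic rationals ⋃_{i≥0} (1/2^i)ℤ. -/
/-! The recursion reads `1 / 2 ^ i = β i - 2 * β (i - 1)` for `i ≥ 2`, and `1 / 2 = β 1 - β 0`,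
`1 = β 0`; so the `β i` and the powers `1 / 2 ^ n` generate the same subgroup of `ℚ`, and the
latter generate the dyadic rationals. -/

def dyadicRationals : AddSubgroup ℚ where
  carrier := {q | ∃ m : ℤ, ∃ n : ℕ, q = m / 2 ^ n}
  zero_mem' := ⟨0, 0, by simp⟩
  add_mem' := by
    rintro _ _ ⟨m, n, rfl⟩ ⟨m', n', rfl⟩
    refine ⟨m * 2 ^ n' + m' * 2 ^ n, n + n', ?_⟩
    push_cast
    field_simp
    ring
  neg_mem' := by
    rintro _ ⟨m, n, rfl⟩
    exact ⟨-m, n, by push_cast; ring⟩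

theorem one_div_two_pow_mem_dyadicRationals (n : ℕ) : (1 / 2 ^ n : ℚ) ∈ dyadicRationals :=
  ⟨1, n, by simp⟩

theorem dyadicRationals_le {H : AddSubgroup ℚ} (h : ∀ n : ℕ, (1 / 2 ^ n : ℚ) ∈ H) :
    dyadicRationals ≤ H := by
  rintro _ ⟨m, n, rfl⟩
  simpa only [zsmul_eq_mul, mul_one_div] using H.zsmul_mem (h n) m

section Recurrence

variable (β : ℕ → ℚ) (h0 : β 0 = 1) (h1 : β 1 = 3 / 2)
  (hrec : ∀ i, 2 ≤ i → β i = 2 * β (i - 1) + 1 / 2 ^ i)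

include hrec in
theorem rec_succ_succ (k : ℕ) : β (k + 2) = 2 * β (k + 1) + 1 / 2 ^ (k + 2) :=
  hrec (k + 2) le_add_self

include h0 h1 hrec in
theorem mem_dyadicRationals_of_rec (i : ℕ) : β i ∈ dyadicRationals := by
  induction i using Nat.strong_induction_on with
  | _ i ih =>
    match i with
    | 0 => exact ⟨1, 0, by simp [h0]⟩
    | 1 => exact ⟨3, 1, by norm_num [h1]⟩
    | k + 2 =>
      rw [rec_succ_succ β hrec, two_mul]
      exact add_mem (add_mem (ih _ (by omega)) (ih _ (by omega)))
        (one_div_two_pow_mem_dyadicRationals _)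

include h0 h1 hrec in
theorem one_div_two_pow_mem_closure_range (n : ℕ) :
    (1 / 2 ^ n : ℚ) ∈ AddSubgroup.closure (Set.range β) := by
  have hβ (j : ℕ) : β j ∈ AddSubgroup.closure (Set.range β) :=
    AddSubgroup.subset_closure ⟨j, rfl⟩
  match n with
  | 0 => simpa [h0] using hβ 0
  | 1 =>
    convert sub_mem (hβ 1) (hβ 0) using 1
    rw [h1, h0]; norm_num
  | k + 2 =>
    convert sub_mem (hβ (k + 2)) (add_mem (hβ (k + 1)) (hβ (k + 1))) using 1
    rw [rec_succ_succ β hrec]; ring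

end Recurrence

/-- With `β₀ = 1`, `β₁ = 3/2`, `β_i = 2β_{i-1} + 1/2^i` for `i ≥ 2`,
the subgroup of `ℚ` generated by all the `β_i` is the group of dyadic rationals. -/
theorem stmt_5 (β : ℕ → ℚ) (h0 : β 0 = 1) (h1 : β 1 = 3 / 2)
    (hrec : ∀ i, 2 ≤ i → β i = 2 * β (i - 1) + 1 / 2 ^ i) :
    (AddSubgroup.closure (Set.range β) : Set ℚ)
      = {q : ℚ | ∃ m : ℤ, ∃ n : ℕ, q = (m : ℚ) / 2 ^ n} := by
  have hclosure : AddSubgroup.closure (Set.range β) = dyadicRationals :=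
    le_antisymm
      ((AddSubgroup.closure_le _).2 <|
        Set.range_subset_iff.2 (mem_dyadicRationals_of_rec β h0 h1 hrec))
      (dyadicRationals_le (one_div_two_pow_mem_closure_range β h0 h1 hrec))
  rw [hclosure]
  rfl
end

section
/- Let β₀, …, β_Λ be positive integers with gcd(β₀,…,β_Λ)=1 generating a numerical semigroup S, with n̄_i = gcd(β₀,…,β_{i-1})/gcd(β₀,…,β_i), and assume β_{i+1} > n̄_i·β_i for 1 ≤ i < Λ. Then n̄_i·β_i belongs to the semigroup generated by β₀,…,β_{i-1} for every i with 1 ≤ i ≤ Λ. -/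
/-!
Write `e_k = gcd(β₀, …, β_{k-1})`. Every multiple `M` of `e_k` with
`M ≥ ∑_{1 ≤ j < k} (n̄_j - 1) β_j` lies in `⟨β₀, …, β_{k-1}⟩`: since `gcd(e_k, β_k) = e_{k+1}`,
a multiple of `e_{k+1}` is congruent modulo `e_k` to `t β_k` for some `t < n̄_k`, and one removes
`t β_k` and inducts. The growth condition telescopes to show that this bound is at most `β_i`, so
it applies to `n̄_i β_i`, which is `lcm(e_i, β_i)` and hence a multiple of `e_i`.
-/

open Finset

theorem Nat.exists_lt_div_gcd_mul_modEq {a b m : ℕ} (ha : 0 < a) (hm : Nat.gcd a b ∣ m) :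
    ∃ t < a / Nat.gcd a b, b * t ≡ m [MOD a] := by
  obtain ⟨c, rfl⟩ := hm
  have hd : 0 < Nat.gcd a b := Nat.gcd_pos_of_pos_left b ha
  obtain ⟨t, ht, hmod⟩ := Nat.exists_mul_mod_eq_of_coprime c
    (Nat.coprime_div_gcd_div_gcd hd).symm
    (Nat.div_pos (Nat.le_of_dvd ha (Nat.gcd_dvd_left a b)) hd).ne'
  refine ⟨t, ht, ?_⟩
  have := (show b / Nat.gcd a b * t ≡ c [MOD a / Nat.gcd a b] from hmod).mul_left' (Nat.gcd a b)
  rwa [← mul_assoc, Nat.mul_div_cancel' (Nat.gcd_dvd_right a b),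
    Nat.mul_div_cancel' (Nat.gcd_dvd_left a b)] at this

namespace NumericalSemigroup

variable (β : ℕ → ℕ)

def prefixGcd (k : ℕ) : ℕ := (range k).gcd β

/-- The paper's `n̄_k = e_k / e_{k+1}`. -/
def gcdRatio (k : ℕ) : ℕ := prefixGcd β k / prefixGcd β (k + 1)

def conductorBound (k : ℕ) : ℕ := ∑ j ∈ Ico 1 k, (gcdRatio β j - 1) * β j

variable {β}

theorem prefixGcd_one : prefixGcd β 1 = β 0 := by
  simp [prefixGcd]

theorem prefixGcd_succ (k : ℕ) : prefixGcd β (k + 1) = Nat.gcd (prefixGcd β k) (β k) := by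
  rw [prefixGcd, range_add_one, gcd_insert, prefixGcd]
  exact Nat.gcd_comm _ _

theorem prefixGcd_pos (h₀ : 0 < β 0) {k : ℕ} (hk : 0 < k) : 0 < prefixGcd β k :=
  Nat.pos_of_ne_zero fun h => h₀.ne' <| (gcd_eq_zero_iff.mp h) 0 (mem_range.mpr hk)

theorem gcdRatio_pos (h₀ : 0 < β 0) {k : ℕ} (hk : 0 < k) : 0 < gcdRatio β k := by
  rw [gcdRatio, prefixGcd_succ]
  exact Nat.div_pos (Nat.le_of_dvd (prefixGcd_pos h₀ hk) (Nat.gcd_dvd_left _ _))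
    (Nat.gcd_pos_of_pos_left _ (prefixGcd_pos h₀ hk))

theorem gcdRatio_mul_eq_lcm (k : ℕ) : gcdRatio β k * β k = Nat.lcm (prefixGcd β k) (β k) := by
  rw [gcdRatio, prefixGcd_succ, Nat.div_mul_right_comm (Nat.gcd_dvd_left _ _)]
  rfl

theorem conductorBound_succ {k : ℕ} (hk : 0 < k) :
    conductorBound β (k + 1) = conductorBound β k + (gcdRatio β k - 1) * β k :=
  sum_Ico_succ_top hk _

theorem generator_mem_closure {j k : ℕ} (h : j < k) :
    β j ∈ AddSubmonoid.closure (β '' Set.Iio k) :=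
  AddSubmonoid.subset_closure (Set.mem_image_of_mem β h)

theorem mem_closure_of_dvd_of_conductorBound_le (h₀ : 0 < β 0) {k : ℕ} (hk : 0 < k) {M : ℕ}
    (hdvd : prefixGcd β k ∣ M) (hle : conductorBound β k ≤ M) :
    M ∈ AddSubmonoid.closure (β '' Set.Iio k) := by
  induction k, hk using Nat.le_induction generalizing M with
  | base =>
    rw [prefixGcd_one] at hdvd
    obtain ⟨c, rfl⟩ := hdvd
    rw [mul_comm, ← smul_eq_mul]
    exact nsmul_mem (generator_mem_closure Nat.one_pos) c
  | succ k hk₀ ih =>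
    rw [prefixGcd_succ] at hdvd
    obtain ⟨t, ht, hmod⟩ := Nat.exists_lt_div_gcd_mul_modEq (prefixGcd_pos h₀ hk₀) hdvd
    rw [← prefixGcd_succ, ← gcdRatio] at ht
    have htM : conductorBound β k + β k * t ≤ M :=
      calc conductorBound β k + β k * t ≤ conductorBound β (k + 1) := by
            rw [conductorBound_succ hk₀, mul_comm]
            gcongr
            omega
        _ ≤ M := hle
    have hrest := ih ((Nat.modEq_iff_dvd' (by omega)).mp hmod) (by omega)
    rw [show M = (M - β k * t) + t • β k by rw [smul_eq_mul, mul_comm t]; omega]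
    exact add_mem
      (AddSubmonoid.closure_mono (Set.image_mono (Set.Iio_subset_Iio k.le_succ)) hrest)
      (nsmul_mem (generator_mem_closure k.lt_succ_self) t)

theorem conductorBound_le (h₀ : 0 < β 0) {i : ℕ} (hi : 0 < i)
    (hgrow : ∀ j, 0 < j → j < i → gcdRatio β j * β j < β (j + 1)) :
    conductorBound β i ≤ β i := by
  induction i, hi using Nat.le_induction with
  | base => simp [conductorBound]
  | succ i hi₀ ih =>
    have hprev := ih fun j hj hji => hgrow j hj (by omega)
    calc conductorBound β (i + 1) = conductorBound β i + (gcdRatio β i - 1) * β i :=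
          conductorBound_succ hi₀
      _ ≤ β i + (gcdRatio β i - 1) * β i := by omega
      _ = gcdRatio β i * β i := by
          rw [Nat.sub_one_mul,
            Nat.add_sub_cancel' (Nat.le_mul_of_pos_left _ (gcdRatio_pos h₀ hi₀))]
      _ ≤ β (i + 1) := (hgrow i hi₀ (by omega)).le

end NumericalSemigroup

open NumericalSemigroup in
theorem stmt_9_general (Λ : ℕ) (β : ℕ → ℕ)
    (hpos : ∀ i, i ≤ Λ → 0 < β i)
    (hgrow : ∀ i, 1 ≤ i → i < Λ →
      (Finset.gcd (Finset.range i) β / Finset.gcd (Finset.range (i + 1)) β) * β i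
        < β (i + 1)) :
    ∀ i, 1 ≤ i → i ≤ Λ →
      (Finset.gcd (Finset.range i) β / Finset.gcd (Finset.range (i + 1)) β) * β i
        ∈ AddSubmonoid.closure (β '' Set.Iio i) := by
  intro i hi hiΛ
  have h₀ : 0 < β 0 := hpos 0 (Nat.zero_le Λ)
  refine mem_closure_of_dvd_of_conductorBound_le h₀ hi ?_ ?_
  · exact (gcdRatio_mul_eq_lcm i).symm ▸ Nat.dvd_lcm_left _ _
  · calc conductorBound β i ≤ β i :=
          conductorBound_le h₀ hi fun j hj hji => hgrow j hj (by omega)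
      _ ≤ gcdRatio β i * β i := Nat.le_mul_of_pos_left _ (gcdRatio_pos h₀ hi)

/-- For positive integers `β₀,…,β_Λ` with gcd `1`, with
`n̄_i = gcd(β₀,…,β_{i-1}) / gcd(β₀,…,β_i)` and `β_{i+1} > n̄_i β_i` for `1 ≤ i < Λ`,
the element `n̄_i · β_i` belongs to the semigroup generated by `β₀,…,β_{i-1}`
for every `1 ≤ i ≤ Λ`. -/
theorem stmt_9 (Λ : ℕ) (hΛ : 1 ≤ Λ) (β : ℕ → ℕ)
    (hpos : ∀ i, i ≤ Λ → 0 < β i)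
    (hgcd : Finset.gcd (Finset.range (Λ + 1)) β = 1)
    (hgrow : ∀ i, 1 ≤ i → i < Λ →
      (Finset.gcd (Finset.range i) β / Finset.gcd (Finset.range (i + 1)) β) * β i
        < β (i + 1)) :
    ∀ i, 1 ≤ i → i ≤ Λ →
      (Finset.gcd (Finset.range i) β / Finset.gcd (Finset.range (i + 1)) β) * β i
        ∈ AddSubmonoid.closure (β '' Set.Iio i) :=
  stmt_9_general Λ β hpos hgrow
end

section
/- Let β₀, …, β_Λ be positive integers with gcd 1 generating a numerical semigroup S, where n̄_i = gcd(β₀,…,β_{i-1})/gcd(β₀,…,β_i) and β_{i+1} > n̄_i·β_i for 1 ≤ i < Λ. Then S is symmetric: there exists m ∈ ℤ such that for all s ∈ ℤ, s ∈ S if and only if m − s ∉ S. -/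
/-!
Write `d_k = gcd(β₀,…,β_k)` and `S_k = ⟨β₀,…,β_k⟩`. Inductively, `S_k` is symmetric inside the
lattice `d_k ℤ` with Frobenius number `m_k = -β₀ + ∑_{i=1}^k (n̄_i - 1) β_i`. Passing from `S_k`
to `S_{k+1} = S_k + ℕ β_{k+1}` is a gluing step: the class of `β_{k+1}` has order
`n̄_{k+1} = d_k / d_{k+1}` in `d_{k+1}ℤ / d_k ℤ` and generates it, and the growth condition gives
`n̄_{k+1} β_{k+1} > m_k`, hence `n̄_{k+1} β_{k+1} ∈ S_k`. So every element of `d_{k+1}ℤ` is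
`x + r β_{k+1}` with `x ∈ d_k ℤ` and a unique `0 ≤ r < n̄_{k+1}`, and it lies in `S_{k+1}` iff
`x ∈ S_k`; the substitution `r ↦ n̄_{k+1} - 1 - r` transports the symmetry of `S_k` to `S_{k+1}`.
-/

def IsSymmetricIn (S : AddSubmonoid ℤ) (d m : ℤ) : Prop :=
  ∀ s : ℤ, d ∣ s → (s ∈ S ↔ m - s ∉ S)

theorem IsSymmetricIn.mem_of_lt {S : AddSubmonoid ℤ} {d m s : ℤ} (hsym : IsSymmetricIn S d m)
    (hS : ∀ x ∈ S, 0 ≤ x) (hd : d ∣ s) (hs : m < s) : s ∈ S :=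
  (hsym s hd).2 fun h => (hS _ h).not_gt (sub_neg.2 hs)

theorem isSymmetricIn_closure_singleton {b : ℤ} (hb : 0 < b) :
    IsSymmetricIn (AddSubmonoid.closure {b}) b (-b) := by
  have mem_iff : ∀ u : ℤ, b * u ∈ AddSubmonoid.closure {b} ↔ 0 ≤ u := by
    intro u
    rw [AddSubmonoid.mem_closure_singleton]
    constructor
    · rintro ⟨n, hn⟩
      rw [nsmul_eq_mul, mul_comm] at hn
      rw [← mul_left_cancel₀ hb.ne' hn]
      positivity
    · intro hu
      exact ⟨u.toNat, by rw [nsmul_eq_mul, Int.toNat_of_nonneg hu, mul_comm]⟩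
  rintro _ ⟨u, rfl⟩
  rw [show -b - b * u = b * (-1 - u) by ring, mem_iff, mem_iff]
  omega

theorem exists_lt_sub_mul_mem {S : AddSubmonoid ℤ} {b t : ℤ} {n : ℕ} (hn : 0 < n)
    (hnb : n * b ∈ S) (ht : t ∈ S ⊔ AddSubmonoid.closure {b}) : ∃ r < n, t - r * b ∈ S := by
  obtain ⟨x, hx, _, hz, rfl⟩ := AddSubmonoid.mem_sup.1 ht
  obtain ⟨k, rfl⟩ := AddSubmonoid.mem_closure_singleton.1 hz
  refine ⟨k % n, Nat.mod_lt k hn, ?_⟩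
  have hk : (k : ℤ) = (k % n : ℕ) + n * (k / n : ℕ) := by exact_mod_cast (Nat.mod_add_div k n).symm
  have hsplit : x + k • b - (k % n : ℕ) * b = x + (k / n) • (n * b) := by
    simp only [nsmul_eq_mul]
    linear_combination b * hk
  rw [hsplit]
  exact add_mem hx (nsmul_mem hnb _)

theorem dvd_div_gcd_mul (d b : ℕ) : d ∣ d / d.gcd b * b := by
  rw [Nat.div_mul_right_comm (Nat.gcd_dvd_left d b), Nat.mul_div_assoc _ (Nat.gcd_dvd_right d b)]
  exact dvd_mul_right _ _

section Gluing

variable {d b : ℕ}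

theorem div_gcd_dvd_of_dvd_mul (hd : 0 < d) {j : ℤ} (h : (d : ℤ) ∣ j * b) :
    ((d / d.gcd b : ℕ) : ℤ) ∣ j := by
  set g := d.gcd b
  have hg : 0 < g := Nat.gcd_pos_of_pos_left b hd
  have hd' : d = d / g * g := (Nat.div_mul_cancel (Nat.gcd_dvd_left d b)).symm
  have hb' : b = b / g * g := (Nat.div_mul_cancel (Nat.gcd_dvd_right d b)).symm
  rw [hd', hb'] at h
  push_cast at h
  rw [← mul_assoc, mul_dvd_mul_iff_right (by positivity)] at h
  exact (Nat.isCoprime_iff_coprime.2 (Nat.coprime_div_gcd_div_gcd hg)).dvd_of_dvd_mul_right h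

theorem exists_lt_dvd_sub_mul (hd : 0 < d) {t : ℤ} (ht : (d.gcd b : ℤ) ∣ t) :
    ∃ r < d / d.gcd b, (d : ℤ) ∣ t - r * b := by
  set n := d / d.gcd b
  have hn : (0 : ℤ) < n := by exact_mod_cast Nat.div_gcd_pos_of_pos_left b hd
  have hdn : (d : ℤ) ∣ n * b := by exact_mod_cast dvd_div_gcd_mul d b
  obtain ⟨u, rfl⟩ := ht
  set q := d.gcdB b * u
  have hq := Int.emod_lt_of_pos q hn
  have hq' := Int.emod_nonneg q hn.ne'
  refine ⟨(q % n).toNat, by omega, ?_⟩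
  rw [Int.toNat_of_nonneg hq', Int.emod_def, Nat.gcd_eq_gcd_ab]
  -- Bézout `gcd d b = d A + b B`: for `t = gcd d b * u`, take `r ≡ B u (mod n)`.
  have hsplit : (d * d.gcdA b + b * d.gcdB b) * u - (q - n * (q / n)) * b
      = d * (d.gcdA b * u) + n * b * (q / n) := by ring
  rw [hsplit]
  exact dvd_add (dvd_mul_right _ _) (hdn.mul_right _)

theorem mem_sup_closure_singleton_iff (hd : 0 < d) {S : AddSubmonoid ℤ}
    (hS : ∀ s ∈ S, (d : ℤ) ∣ s) (hnb : ((d / d.gcd b : ℕ) : ℤ) * b ∈ S) {t : ℤ} {r : ℕ}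
    (hr : r < d / d.gcd b) (ht : (d : ℤ) ∣ t - r * b) :
    t ∈ S ⊔ AddSubmonoid.closure {(b : ℤ)} ↔ t - r * b ∈ S := by
  set n := d / d.gcd b
  constructor
  · intro h
    obtain ⟨r', hr', h'⟩ := exists_lt_sub_mul_mem (Nat.div_gcd_pos_of_pos_left b hd) hnb h
    have hdvd : (d : ℤ) ∣ ((r : ℤ) - r') * b := by
      have hsub := dvd_sub (hS _ h') ht
      rwa [show t - r' * b - (t - r * b) = ((r : ℤ) - r') * b by ring] at hsub
    have hrr' := Int.eq_zero_of_abs_lt_dvd (div_gcd_dvd_of_dvd_mul hd hdvd) (by rw [abs_lt]; omega)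
    obtain rfl : r = r' := by omega
    exact h'
  · intro h
    have hb : (r : ℤ) * b ∈ S ⊔ AddSubmonoid.closure {(b : ℤ)} := by
      rw [← nsmul_eq_mul]
      exact nsmul_mem (AddSubmonoid.mem_sup_right (AddSubmonoid.subset_closure (Set.mem_singleton _))) r
    have hsum := add_mem (AddSubmonoid.mem_sup_left h) hb
    rwa [sub_add_cancel] at hsum

theorem IsSymmetricIn.sup_closure_singleton (hd : 0 < d) {S : AddSubmonoid ℤ} {m : ℤ}
    (hsym : IsSymmetricIn S d m) (hS : ∀ s ∈ S, (d : ℤ) ∣ s) (hm : (d : ℤ) ∣ m)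
    (hnb : ((d / d.gcd b : ℕ) : ℤ) * b ∈ S) :
    IsSymmetricIn (S ⊔ AddSubmonoid.closure {(b : ℤ)}) (d.gcd b)
      (m + ((d / d.gcd b : ℕ) - 1) * b) := by
  intro t ht
  obtain ⟨r, hr, htr⟩ := exists_lt_dvd_sub_mul hd ht
  set n := d / d.gcd b
  have hflip : m + (n - 1) * b - t - ((n - 1 - r : ℕ) : ℤ) * b = m - (t - r * b) := by
    rw [Nat.cast_sub (by omega), Nat.cast_sub (by omega)]
    ring
  have hflip_dvd : (d : ℤ) ∣ m + (n - 1) * b - t - ((n - 1 - r : ℕ) : ℤ) * b :=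
    hflip ▸ dvd_sub hm htr
  rw [mem_sup_closure_singleton_iff hd hS hnb hr htr,
    mem_sup_closure_singleton_iff hd hS hnb (by omega) hflip_dvd, hflip]
  exact hsym _ htr

end Gluing

namespace Telescopic

variable {β : ℕ → ℕ} {k : ℕ}

/-- `gcd(β₀,…,β_{k-1})`; the generators of `semigroupUpTo β k` have gcd `gcdBelow β (k + 1)`. -/
def gcdBelow (β : ℕ → ℕ) (k : ℕ) : ℕ := (Finset.range k).gcd β

def semigroupUpTo (β : ℕ → ℕ) (k : ℕ) : AddSubmonoid ℤ :=
  AddSubmonoid.closure ((fun j => (β j : ℤ)) '' Set.Iic k)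

def frobenius (β : ℕ → ℕ) : ℕ → ℤ
  | 0 => -(β 0 : ℤ)
  | k + 1 => frobenius β k + ((gcdBelow β (k + 1) / gcdBelow β (k + 2) : ℕ) - 1) * β (k + 1)

theorem gcdBelow_succ (β : ℕ → ℕ) (k : ℕ) : gcdBelow β (k + 1) = (gcdBelow β k).gcd (β k) := by
  rw [gcdBelow, Finset.range_add_one, Finset.gcd_insert, gcd_comm]
  rfl

theorem gcdBelow_dvd {j : ℕ} (h : j < k) : gcdBelow β k ∣ β j :=
  Finset.gcd_dvd (Finset.mem_range.2 h)

theorem gcdBelow_pos (h0 : 0 < β 0) (k : ℕ) : 0 < gcdBelow β (k + 1) :=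
  Nat.pos_of_dvd_of_pos (gcdBelow_dvd k.succ_pos) h0

theorem semigroupUpTo_zero (β : ℕ → ℕ) : semigroupUpTo β 0 = AddSubmonoid.closure {(β 0 : ℤ)} := by
  rw [semigroupUpTo, show Set.Iic 0 = {0} from Set.Iic_bot, Set.image_singleton]

theorem semigroupUpTo_succ (β : ℕ → ℕ) (k : ℕ) :
    semigroupUpTo β (k + 1) = semigroupUpTo β k ⊔ AddSubmonoid.closure {(β (k + 1) : ℤ)} := by
  rw [semigroupUpTo, semigroupUpTo, ← AddSubmonoid.closure_union]
  congr 1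
  ext x
  simp only [Set.mem_image, Set.mem_Iic, Set.mem_union, Set.mem_singleton_iff]
  constructor
  · rintro ⟨j, hj, rfl⟩
    rcases Nat.le_add_one_iff.1 hj with hj | rfl
    exacts [Or.inl ⟨j, hj, rfl⟩, Or.inr rfl]
  · rintro (⟨j, hj, rfl⟩ | rfl)
    exacts [⟨j, by omega, rfl⟩, ⟨k + 1, le_rfl, rfl⟩]

theorem nonneg_of_mem_semigroupUpTo {s : ℤ} (hs : s ∈ semigroupUpTo β k) : 0 ≤ s := by
  induction hs using AddSubmonoid.closure_induction with
  | mem x hx =>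
    obtain ⟨j, -, rfl⟩ := hx
    positivity
  | zero => exact le_rfl
  | add x y _ _ hx hy => exact add_nonneg hx hy

theorem gcdBelow_dvd_of_mem_semigroupUpTo {s : ℤ} (hs : s ∈ semigroupUpTo β k) :
    (gcdBelow β (k + 1) : ℤ) ∣ s := by
  induction hs using AddSubmonoid.closure_induction with
  | mem x hx =>
    obtain ⟨j, hj, rfl⟩ := hx
    exact Int.natCast_dvd_natCast.2 (gcdBelow_dvd (Nat.lt_succ_of_le hj))
  | zero => exact dvd_zero _
  | add x y _ _ hx hy => exact dvd_add hx hy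

theorem gcdBelow_dvd_frobenius (β : ℕ → ℕ) (k : ℕ) : (gcdBelow β (k + 1) : ℤ) ∣ frobenius β k := by
  induction k with
  | zero => exact (Int.natCast_dvd_natCast.2 (gcdBelow_dvd Nat.one_pos)).neg_right
  | succ k ih =>
    have hg : gcdBelow β (k + 2) ∣ gcdBelow β (k + 1) := by
      rw [gcdBelow_succ β (k + 1)]
      exact Nat.gcd_dvd_left _ _
    exact dvd_add ((Int.natCast_dvd_natCast.2 hg).trans ih)
      ((Int.natCast_dvd_natCast.2 (gcdBelow_dvd (Nat.lt_succ_self _))).mul_left _)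

theorem frobenius_lt {Λ : ℕ} (h0 : 0 < β 0)
    (hgrow : ∀ i, 1 ≤ i → i < Λ → gcdBelow β i / gcdBelow β (i + 1) * β i < β (i + 1)) :
    ∀ k < Λ, frobenius β k < β (k + 1) := by
  intro k hk
  induction k with
  | zero =>
    show -(β 0 : ℤ) < β 1
    omega
  | succ k ih =>
    have hgrow_k : ((gcdBelow β (k + 1) / gcdBelow β (k + 2) : ℕ) : ℤ) * β (k + 1) < β (k + 2) := by
      exact_mod_cast hgrow (k + 1) (Nat.le_add_left 1 k) hk
    rw [frobenius]
    linarith [ih (by omega)]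

theorem isSymmetricIn_semigroupUpTo_zero (h0 : 0 < β 0) :
    IsSymmetricIn (semigroupUpTo β 0) (gcdBelow β 1) (frobenius β 0) := by
  rw [semigroupUpTo_zero, gcdBelow_succ, gcdBelow, Finset.range_zero, Finset.gcd_empty,
    Nat.gcd_zero_left]
  exact isSymmetricIn_closure_singleton (by exact_mod_cast h0)

theorem isSymmetricIn_semigroupUpTo_succ (h0 : 0 < β 0)
    (hsym : IsSymmetricIn (semigroupUpTo β k) (gcdBelow β (k + 1)) (frobenius β k))
    (hlt : frobenius β k < β (k + 1)) :
    IsSymmetricIn (semigroupUpTo β (k + 1)) (gcdBelow β (k + 2)) (frobenius β (k + 1)) := by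
  set d := gcdBelow β (k + 1)
  have hd : 0 < d := gcdBelow_pos h0 k
  have hn : 1 ≤ ((d / d.gcd (β (k + 1)) : ℕ) : ℤ) := by
    exact_mod_cast Nat.div_gcd_pos_of_pos_left _ hd
  have hnb : ((d / d.gcd (β (k + 1)) : ℕ) : ℤ) * β (k + 1) ∈ semigroupUpTo β k := by
    refine hsym.mem_of_lt (fun _ => nonneg_of_mem_semigroupUpTo)
      (by exact_mod_cast dvd_div_gcd_mul d (β (k + 1))) ?_
    nlinarith [(Nat.cast_nonneg (β (k + 1)) : (0 : ℤ) ≤ _)]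
  rw [semigroupUpTo_succ, frobenius, gcdBelow_succ β (k + 1)]
  exact hsym.sup_closure_singleton hd (fun _ => gcdBelow_dvd_of_mem_semigroupUpTo)
    (gcdBelow_dvd_frobenius β k) hnb

theorem isSymmetricIn_semigroupUpTo {Λ : ℕ} (h0 : 0 < β 0)
    (hgrow : ∀ i, 1 ≤ i → i < Λ → gcdBelow β i / gcdBelow β (i + 1) * β i < β (i + 1)) :
    ∀ k ≤ Λ, IsSymmetricIn (semigroupUpTo β k) (gcdBelow β (k + 1)) (frobenius β k) := by
  intro k hk
  induction k with
  | zero => exact isSymmetricIn_semigroupUpTo_zero h0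
  | succ k ih =>
    exact isSymmetricIn_semigroupUpTo_succ h0 (ih (by omega)) (frobenius_lt h0 hgrow k (by omega))

end Telescopic

open Telescopic in
theorem stmt_10_general (Λ : ℕ) (β : ℕ → ℕ)
    (hpos : ∀ i, i ≤ Λ → 0 < β i)
    (hgcd : Finset.gcd (Finset.range (Λ + 1)) β = 1)
    (hgrow : ∀ i, 1 ≤ i → i < Λ →
      (Finset.gcd (Finset.range i) β / Finset.gcd (Finset.range (i + 1)) β) * β i
        < β (i + 1)) :
    ∃ m : ℤ, ∀ s : ℤ,
      s ∈ AddSubmonoid.closure ((fun j => (β j : ℤ)) '' Set.Iic Λ) ↔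
      m - s ∉ AddSubmonoid.closure ((fun j => (β j : ℤ)) '' Set.Iic Λ) := by
  have hsym := isSymmetricIn_semigroupUpTo (hpos 0 Λ.zero_le) hgrow Λ le_rfl
  have hunit : gcdBelow β (Λ + 1) = 1 := hgcd
  refine ⟨frobenius β Λ, fun s => hsym s ?_⟩
  rw [hunit, Nat.cast_one]
  exact one_dvd s

/-- For positive integers `β₀,…,β_Λ` with gcd `1`, with
`n̄_i = gcd(β₀,…,β_{i-1}) / gcd(β₀,…,β_i)` and `β_{i+1} > n̄_i β_i` for `1 ≤ i < Λ`,
the numerical semigroup `S` generated by `β₀,…,β_Λ` is symmetric: there is `m ∈ ℤ`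
with `s ∈ S ↔ m - s ∉ S` for all `s ∈ ℤ`. -/
theorem stmt_10 (Λ : ℕ) (hΛ : 1 ≤ Λ) (β : ℕ → ℕ)
    (hpos : ∀ i, i ≤ Λ → 0 < β i)
    (hgcd : Finset.gcd (Finset.range (Λ + 1)) β = 1)
    (hgrow : ∀ i, 1 ≤ i → i < Λ →
      (Finset.gcd (Finset.range i) β / Finset.gcd (Finset.range (i + 1)) β) * β i
        < β (i + 1)) :
    ∃ m : ℤ, ∀ s : ℤ,
      s ∈ AddSubmonoid.closure ((fun j => (β j : ℤ)) '' Set.Iic Λ) ↔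
      m - s ∉ AddSubmonoid.closure ((fun j => (β j : ℤ)) '' Set.Iic Λ) :=
  stmt_10_general Λ β hpos hgcd hgrow
end

section
/- Define β₀ = 1, β₁ = 5/3 and suppose β_n = b_n + 5/3^n with b_n a positive integer and b_n > 3b_{n-1} for n ≥ 2 (so 3β_{n-1} < β_n). Fix n ≥ 2 and let T be the semigroup generated by {β_i + β_j : 0 ≤ i ≤ j ≤ n−1} together with β₀ + β_n. If β₁ + β_n = r(β₀ + β_n) + τ with r a positive integer and τ a (possibly empty) nonnegative-integer combination of the elements {β_i + β_j : i ≤ j ≤ n−1}, then r = 1 and τ = 2/3; but all elements β_i + β_j are ≥ 2, contradiction. Hence β₁ + β_n ∉ T. -/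
/-!
Write an element of the semigroup as `τ + r • (β 0 + β n)` with `τ` in the semigroup generated
by the `β i + β j`, `i ≤ j ≤ n - 1`. These generators are `≥ 2` and lie in `3^{-(n-1)} ℤ`, hence
so does `τ` unless `τ = 0`. Comparing with `β 1 + β n`: `r ≥ 2` is too large, `r = 1` forces
`τ = 2/3`, and `r = 0` would put `5 / 3 ^ n` into `3^{-(n-1)} ℤ`.
-/

open AddSubgroup

theorem AddSubmonoid.mem_closure_union_singleton {M : Type*} [AddCommMonoid M] {s : Set M}
    {g x : M} :
    x ∈ AddSubmonoid.closure (s ∪ {g}) ↔ ∃ y ∈ AddSubmonoid.closure s, ∃ r : ℕ, y + r • g = x := by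
  simp only [AddSubmonoid.closure_union, AddSubmonoid.mem_sup, AddSubmonoid.mem_closure_singleton]
  constructor
  · rintro ⟨y, hy, _, ⟨r, rfl⟩, rfl⟩
    exact ⟨y, hy, r, rfl⟩
  · rintro ⟨y, hy, r, rfl⟩
    exact ⟨y, hy, _, ⟨r, rfl⟩, rfl⟩

theorem AddSubmonoid.eq_zero_or_le_of_mem_closure {M : Type*} [AddCommMonoid M] [PartialOrder M]
    [IsOrderedAddMonoid M] {s : Set M} {a x : M} (ha : 0 ≤ a) (hs : ∀ y ∈ s, a ≤ y)
    (hx : x ∈ AddSubmonoid.closure s) : x = 0 ∨ a ≤ x := by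
  induction hx using AddSubmonoid.closure_induction with
  | mem y hy => exact .inr (hs y hy)
  | zero => exact .inl rfl
  | add y z _ _ hy hz =>
    rcases hy with rfl | hy
    · simpa using hz
    rcases hz with rfl | hz
    · exact .inr (by simpa using hy)
    exact .inr (le_add_of_le_of_nonneg hy (ha.trans hz))

theorem inv_pow_mem_zmultiples_inv_pow {p : ℕ} (hp : p ≠ 0) {i m : ℕ} (h : i ≤ m) :
    ((p : ℚ) ^ i)⁻¹ ∈ zmultiples ((p : ℚ) ^ m)⁻¹ := by
  refine mem_zmultiples_iff.2 ⟨(p : ℤ) ^ (m - i), ?_⟩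
  have : (p : ℚ) ^ m = p ^ (m - i) * p ^ i := by rw [← pow_add, Nat.sub_add_cancel h]
  rw [zsmul_eq_mul, this]
  push_cast
  field_simp

theorem intCast_mem_zmultiples_inv_pow {p : ℕ} (hp : p ≠ 0) (k : ℤ) (m : ℕ) :
    (k : ℚ) ∈ zmultiples ((p : ℚ) ^ m)⁻¹ := by
  simpa using zsmul_mem (inv_pow_mem_zmultiples_inv_pow hp (Nat.zero_le m)) k

theorem div_pow_succ_notMem_zmultiples_inv_pow {p : ℕ} (hp : p ≠ 0) {a : ℤ} (ha : ¬(p : ℤ) ∣ a)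
    (m : ℕ) : (a : ℚ) / p ^ (m + 1) ∉ zmultiples ((p : ℚ) ^ m)⁻¹ := by
  intro hmem
  obtain ⟨k, hk⟩ := mem_zmultiples_iff.1 hmem
  rw [zsmul_eq_mul, pow_succ] at hk
  field_simp at hk
  exact ha (Dvd.intro_left k (by exact_mod_cast hk))

section

variable {β : ℕ → ℚ} {b : ℕ → ℤ}

theorem one_le_beta (h0 : β 0 = 1) (h1 : β 1 = 5 / 3) (hb : ∀ i, 2 ≤ i → 0 < b i)
    (hβ : ∀ i, 2 ≤ i → β i = (b i : ℚ) + 5 / 3 ^ i) (i : ℕ) : 1 ≤ β i := by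
  match i with
  | 0 => rw [h0]
  | 1 => rw [h1]; norm_num
  | i + 2 =>
    have hbi : (1 : ℚ) ≤ b (i + 2) := by exact_mod_cast hb (i + 2) le_add_self
    rw [hβ (i + 2) le_add_self]
    linarith [show (0 : ℚ) < 5 / 3 ^ (i + 2) by positivity]

theorem beta_mem_zmultiples_inv_three_pow (h0 : β 0 = 1) (h1 : β 1 = 5 / 3)
    (hβ : ∀ i, 2 ≤ i → β i = (b i : ℚ) + 5 / 3 ^ i) {i m : ℕ} (hi : i ≤ m) :
    β i ∈ zmultiples ((3 : ℚ) ^ m)⁻¹ := by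
  have h3 : (3 : ℕ) ≠ 0 := by norm_num
  have h5 : ((5 : ℤ) : ℚ) / 3 ^ i ∈ zmultiples ((3 : ℚ) ^ m)⁻¹ := by
    simpa [div_eq_mul_inv] using zsmul_mem (inv_pow_mem_zmultiples_inv_pow h3 hi) 5
  match i with
  | 0 => simpa [h0] using intCast_mem_zmultiples_inv_pow h3 1 m
  | 1 => simpa [h1] using h5
  | i + 2 =>
    rw [hβ (i + 2) le_add_self]
    exact add_mem (intCast_mem_zmultiples_inv_pow h3 _ m) (by simpa using h5)

end

theorem stmt_19_general (β : ℕ → ℚ) (b : ℕ → ℤ)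
    (h0 : β 0 = 1) (h1 : β 1 = 5 / 3)
    (hb : ∀ i, 2 ≤ i → 0 < b i)
    (hβ : ∀ i, 2 ≤ i → β i = (b i : ℚ) + 5 / 3 ^ i)
    (n : ℕ) (hn : 2 ≤ n) :
    β 1 + β n ∉ AddSubmonoid.closure
      ({x : ℚ | ∃ i j : ℕ, i ≤ j ∧ j ≤ n - 1 ∧ x = β i + β j} ∪ {β 0 + β n}) := by
  rw [AddSubmonoid.mem_closure_union_singleton]
  rintro ⟨τ, hτ, r, hsum⟩
  have hβ1 := one_le_beta h0 h1 hb hβ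
  have hτ_dichotomy : τ = 0 ∨ 2 ≤ τ := by
    refine AddSubmonoid.eq_zero_or_le_of_mem_closure zero_le_two ?_ hτ
    rintro _ ⟨i, j, -, -, rfl⟩
    linarith [hβ1 i, hβ1 j]
  have hτ_mem : τ ∈ zmultiples ((3 : ℚ) ^ (n - 1))⁻¹ := by
    refine (AddSubmonoid.closure_le (S := (zmultiples _).toAddSubmonoid)).2 ?_ hτ
    rintro _ ⟨i, j, hij, hj, rfl⟩
    exact add_mem (beta_mem_zmultiples_inv_three_pow h0 h1 hβ (hij.trans hj))
      (beta_mem_zmultiples_inv_three_pow h0 h1 hβ hj)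
  rw [h0, h1] at hsum
  rcases r with _ | _ | r
  · -- the summand `5 / 3 ^ n` of `β n` has too large a denominator
    rw [zero_smul, add_zero] at hsum
    have h5 : ((5 : ℤ) : ℚ) / 3 ^ (n - 1 + 1) = τ - β 1 - b n := by
      rw [Nat.sub_add_cancel (by omega : 1 ≤ n), h1, hsum, hβ n hn]; push_cast; ring
    refine div_pow_succ_notMem_zmultiples_inv_pow (p := 3) (a := 5) (by norm_num) (by decide)
      (n - 1) ?_
    rw [Nat.cast_ofNat, h5]
    exact sub_mem (sub_mem hτ_mem (beta_mem_zmultiples_inv_three_pow h0 h1 hβ (by omega)))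
      (intCast_mem_zmultiples_inv_pow (by norm_num) _ _)
  · have : τ = 2 / 3 := by rw [zero_add, one_smul] at hsum; linarith
    rcases hτ_dichotomy with h | h <;> norm_num [this] at h
  · have hτ0 : 0 ≤ τ := by rcases hτ_dichotomy with h | h <;> linarith
    rw [nsmul_eq_mul] at hsum
    push_cast at hsum
    nlinarith [hβ1 n]

/-- With `β₀ = 1`, `β₁ = 5/3`, `β_i = b_i + 5/3^i` (`b_i` positive integers,
`b_i > 3 b_{i-1}`, `b₂ > 5`), for fixed `n ≥ 2` the element `β₁ + β_n` does not belong
to the semigroup `T` generated by `{β_i + β_j : 0 ≤ i ≤ j ≤ n-1}` together with `β₀ + β_n`. -/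
theorem stmt_19 (β : ℕ → ℚ) (b : ℕ → ℤ)
    (h0 : β 0 = 1) (h1 : β 1 = 5 / 3)
    (hb : ∀ i, 2 ≤ i → 0 < b i)
    (hβ : ∀ i, 2 ≤ i → β i = (b i : ℚ) + 5 / 3 ^ i)
    (hbg : ∀ i, 3 ≤ i → 3 * b (i - 1) < b i)
    (hb2 : 5 < b 2)
    (n : ℕ) (hn : 2 ≤ n) :
    β 1 + β n ∉ AddSubmonoid.closure
      ({x : ℚ | ∃ i j : ℕ, i ≤ j ∧ j ≤ n - 1 ∧ x = β i + β j} ∪ {β 0 + β n}) :=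
  stmt_19_general β b h0 h1 hb hβ n hn
end
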